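/- For |ω| ≤ 1/2, Σ_{j≥0} |ψ̂₁(2^{-2j}ω)|² = 0; for 1/2 < |ω| < 1 this sum equals sin²((π/2)v(2|ω|-1)); and for |ω| ≥ 1 it equals 1. -/

import Mathlib

/-!
Since `|psi1 x|² = b (2x)² + b x²`, the terms of the sum over the scales `4^{-j} ω` interleave
into the single dyadic series `∑_{k ≥ 0} b (2ω / 2^k)²`. The function `b` vanishes for `|x| ≤ 1`
and `|x| ≥ 4`, and `b x² + b (2x)² = sin² + cos² = 1` for `1 ≤ |x| ≤ 2`. So for `|2ω| < 2` only
the term `b (2ω)²` survives, while for `|2ω| ≥ 2` exactly the two terms at `x` and `2x`, with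
`x = 2ω / 2^k` in `[1, 2)`, survive and add up to `1`.
-/

noncomputable def v (x : ℝ) : ℝ :=
  if x < 0 then 0
  else if x ≤ 1 then 35*x^4 - 84*x^5 + 70*x^6 - 20*x^7
  else 1

noncomputable def b (ω : ℝ) : ℝ :=
  if 1 ≤ |ω| ∧ |ω| ≤ 2 then Real.sin (Real.pi/2 * v (|ω| - 1))
  else if 2 < |ω| ∧ |ω| ≤ 4 then Real.cos (Real.pi/2 * v (|ω|/2 - 1))
  else 0

noncomputable def psi1 (ω : ℝ) : ℝ := Real.sqrt (b (2*ω) ^ 2 + b ω ^ 2)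

lemma v_zero : v 0 = 0 := by norm_num [v]

lemma v_one : v 1 = 1 := by norm_num [v]

lemma b_of_abs_mem_Icc_one_two {x : ℝ} (h₁ : 1 ≤ |x|) (h₂ : |x| ≤ 2) :
    b x = Real.sin (Real.pi / 2 * v (|x| - 1)) :=
  if_pos ⟨h₁, h₂⟩

lemma b_of_abs_mem_Ioc_two_four {x : ℝ} (h₁ : 2 < |x|) (h₂ : |x| ≤ 4) :
    b x = Real.cos (Real.pi / 2 * v (|x| / 2 - 1)) := by
  rw [b, if_neg (by rintro ⟨-, h⟩; linarith), if_pos ⟨h₁, h₂⟩]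

lemma b_eq_zero_of_abs_le_one {x : ℝ} (h : |x| ≤ 1) : b x = 0 := by
  rcases h.eq_or_lt with h | h
  · simp [b_of_abs_mem_Icc_one_two h.ge (by linarith), h, v_zero]
  · rw [b, if_neg (by rintro ⟨h', -⟩; linarith), if_neg (by rintro ⟨h', -⟩; linarith)]

lemma b_eq_zero_of_four_le_abs {x : ℝ} (h : 4 ≤ |x|) : b x = 0 := by
  rcases h.eq_or_lt with h | h
  · norm_num [b_of_abs_mem_Ioc_two_four (by linarith) h.ge, ← h, v_one]
  · rw [b, if_neg (by rintro ⟨-, h'⟩; linarith), if_neg (by rintro ⟨-, h'⟩; linarith)]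

lemma b_sq_add_b_two_mul_sq {x : ℝ} (h₁ : 1 ≤ |x|) (h₂ : |x| ≤ 2) :
    b x ^ 2 + b (2 * x) ^ 2 = 1 := by
  have h2x : |2 * x| = 2 * |x| := by simp [abs_mul]
  rcases h₁.eq_or_lt with h₁ | h₁
  · rw [b_eq_zero_of_abs_le_one h₁.ge,
      b_of_abs_mem_Icc_one_two (by linarith) (by linarith), h2x, ← h₁]
    norm_num [v_one]
  · rw [b_of_abs_mem_Icc_one_two h₁.le h₂,
      b_of_abs_mem_Ioc_two_four (by linarith) (by linarith), h2x, mul_div_cancel_left₀ _ two_ne_zero]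
    exact Real.sin_sq_add_cos_sq _

lemma sq_abs_psi1 (x : ℝ) : |psi1 x| ^ 2 = b (2 * x) ^ 2 + b x ^ 2 := by
  rw [sq_abs, psi1, Real.sq_sqrt (by positivity)]

lemma b_div_two_pow_eq_zero {y : ℝ} {k : ℕ} (h : |y| ≤ 2 ^ k ∨ 2 ^ (k + 2) ≤ |y|) :
    b (y / 2 ^ k) = 0 := by
  have hk : (0 : ℝ) < 2 ^ k := by positivity
  have habs : |y / 2 ^ k| = |y| / 2 ^ k := by rw [abs_div, abs_pow, abs_two]
  rcases h with h | h
  · exact b_eq_zero_of_abs_le_one (habs ▸ (div_le_one hk).2 h)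
  · exact b_eq_zero_of_four_le_abs (habs ▸ (le_div_iff₀ hk).2 (by rw [pow_add] at h; linarith))

lemma summable_b_sq_div_two_pow (y : ℝ) : Summable fun k : ℕ ↦ b (y / 2 ^ k) ^ 2 := by
  obtain ⟨N, hN⟩ := pow_unbounded_of_one_lt |y| (one_lt_two : (1 : ℝ) < 2)
  refine summable_of_ne_finset_zero (s := Finset.range N) fun k hk ↦ ?_
  have : (2 : ℝ) ^ N ≤ 2 ^ k := pow_le_pow_right₀ one_le_two (by simpa using hk)
  rw [b_div_two_pow_eq_zero (Or.inl (by linarith)), sq, zero_mul]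

lemma tsum_sq_abs_psi1 (ω : ℝ) :
    ∑' j : ℕ, |psi1 ((2 : ℝ) ^ (-(2 * (j : ℤ))) * ω)| ^ 2 = ∑' k : ℕ, b (2 * ω / 2 ^ k) ^ 2 := by
  set g : ℕ → ℝ := fun k ↦ b (2 * ω / 2 ^ k) ^ 2
  have hg := summable_b_sq_div_two_pow (2 * ω)
  have h2 : Function.Injective fun j : ℕ ↦ 2 * j := mul_right_injective₀ two_ne_zero
  have heven : Summable fun j ↦ g (2 * j) := hg.comp_injective h2
  have hodd : Summable fun j ↦ g (2 * j + 1) := hg.comp_injective ((add_left_injective 1).comp h2)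
  have hterm (j : ℕ) : |psi1 ((2 : ℝ) ^ (-(2 * (j : ℤ))) * ω)| ^ 2 = g (2 * j) + g (2 * j + 1) := by
    have : (2 : ℝ) ^ (-(2 * (j : ℤ))) = 1 / 2 ^ (2 * j) := by
      rw [zpow_neg, one_div]; norm_cast
    rw [sq_abs_psi1, this, one_div_mul_eq_div, mul_div_assoc']
    congr 3
    rw [pow_succ', mul_div_mul_left _ _ two_ne_zero]
  rw [tsum_congr hterm, heven.tsum_add hodd, tsum_even_add_odd heven hodd]

lemma tsum_b_sq_div_two_pow_of_abs_lt_two {y : ℝ} (h : |y| < 2) :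
    ∑' k : ℕ, b (y / 2 ^ k) ^ 2 = b y ^ 2 := by
  rw [tsum_eq_single 0 fun k hk ↦ ?_, pow_zero, div_one]
  have : (2 : ℝ) ≤ 2 ^ k := le_self_pow₀ one_le_two hk
  rw [b_div_two_pow_eq_zero (Or.inl (by linarith)), sq, zero_mul]

lemma tsum_b_sq_div_two_pow_of_two_le_abs {y : ℝ} (h : 2 ≤ |y|) :
    ∑' k : ℕ, b (y / 2 ^ k) ^ 2 = 1 := by
  obtain ⟨n, hn₁, hn₂⟩ := exists_nat_pow_near (by linarith : 1 ≤ |y| / 2) one_lt_two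
  rw [le_div_iff₀ two_pos, ← pow_succ] at hn₁
  rw [div_lt_iff₀ two_pos, ← pow_succ] at hn₂
  have hpow {i j : ℕ} (hij : i ≤ j) : (2 : ℝ) ^ i ≤ 2 ^ j := pow_le_pow_right₀ one_le_two hij
  rw [tsum_eq_sum (s := {n, n + 1}) fun k hk ↦ ?_, Finset.sum_pair (by omega)]
  · have hx : |y / 2 ^ (n + 1)| = |y| / 2 ^ (n + 1) := by rw [abs_div, abs_pow, abs_two]
    have h2x : y / 2 ^ n = 2 * (y / 2 ^ (n + 1)) := by rw [pow_succ]; field_simp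
    rw [h2x, add_comm]
    refine b_sq_add_b_two_mul_sq ?_ ?_ <;> rw [hx]
    · exact (one_le_div (by positivity)).2 hn₁
    · exact (div_le_iff₀ (by positivity)).2 (by rw [← pow_succ']; exact hn₂.le)
  · simp only [Finset.mem_insert, Finset.mem_singleton, not_or] at hk
    refine (b_div_two_pow_eq_zero ?_).symm ▸ zero_pow two_ne_zero
    rcases lt_or_gt_of_ne hk.1 with hk | hk
    · exact Or.inr ((hpow (by omega)).trans hn₁)
    · exact Or.inl (hn₂.le.trans (hpow (by omega)))

theorem psi1_sum_cases :
    (∀ ω : ℝ, |ω| ≤ 1/2 → ∑' j : ℕ, |psi1 ((2:ℝ) ^ (-(2 * (j:ℤ))) * ω)| ^ 2 = 0) ∧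
    (∀ ω : ℝ, 1/2 < |ω| → |ω| < 1 →
      ∑' j : ℕ, |psi1 ((2:ℝ) ^ (-(2 * (j:ℤ))) * ω)| ^ 2
        = Real.sin (Real.pi/2 * v (2*|ω| - 1)) ^ 2) ∧
    (∀ ω : ℝ, 1 ≤ |ω| → ∑' j : ℕ, |psi1 ((2:ℝ) ^ (-(2 * (j:ℤ))) * ω)| ^ 2 = 1) := by
  have h2ω (ω : ℝ) : |2 * ω| = 2 * |ω| := by rw [abs_mul, abs_two]
  refine ⟨fun ω hω ↦ ?_, fun ω hω₁ hω₂ ↦ ?_, fun ω hω ↦ ?_⟩ <;> rw [tsum_sq_abs_psi1]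
  · rw [tsum_b_sq_div_two_pow_of_abs_lt_two (by linarith [h2ω ω]),
      b_eq_zero_of_abs_le_one (by linarith [h2ω ω]), sq, zero_mul]
  · rw [tsum_b_sq_div_two_pow_of_abs_lt_two (by linarith [h2ω ω]),
      b_of_abs_mem_Icc_one_two (by linarith [h2ω ω]) (by linarith [h2ω ω]), h2ω]
  · exact tsum_b_sq_div_two_pow_of_two_le_abs (by linarith [h2ω ω])
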